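/- arXiv:1505.07822 — 4 statements merged into one kernel-verified Lean document; each statement's English description precedes it below -/
import Mathlib

section
/- (Muckenhoupt two-weight Hardy inequality.) Let μ and ν be locally finite positive Borel measures on (0,∞). If A := sup_{0<r<∞} ν([r,∞)) · μ((0,r]) < ∞, then for every nonnegative measurable f on (0,∞), ∫₀^∞ ( ∫_{(0,t]} f dμ )² dν(t) ≤ C·A·∫₀^∞ f² dμ, where C is an absolute constant. -/
/-!
Restricting `μ` and `ν` to `(0,∞)` turns `μ (Ioc 0 t)` into `μ (Iic t)`, and Muckenhoupt's
argument then works on any second countable linear order. Put `W t = μ (Iic t)` and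
`V t = ν (Ici t)`. Since `μ {W ≤ c} ≤ c`, summing over the dyadic level shells of `W` gives
`∫_{Iic t} W^{-1/2} dμ ≤ 4 W(t)^{1/2}`, and likewise `∫_{Ici s} V^{-1/2} dν ≤ 4 V(s)^{1/2}`.
Cauchy–Schwarz with the weight `W^{1/2}` gives
`(∫_{Iic t} f dμ)² ≤ 4 W(t)^{1/2} ∫_{Iic t} f² W^{1/2} dμ`. After Tonelli it remains to bound
`W(s)^{1/2} ∫_{Ici s} W^{1/2} dν`; as `W ≤ A / V`, the second estimate bounds it by `4 A`,
whence the constant `16`.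
-/

open MeasureTheory Set
open scoped ENNReal

theorem ENNReal.rpow_inv_two_sq (x : ℝ≥0∞) : (x ^ (2⁻¹ : ℝ)) ^ 2 = x := by
  rw [← ENNReal.rpow_two, ENNReal.rpow_inv_rpow two_ne_zero]

theorem ENNReal.exists_mul_inv_two_pow_lt_le {x γ : ℝ≥0∞} (hx : x ≠ 0) (hxγ : x ≤ γ)
    (hγ : γ ≠ ⊤) : ∃ k : ℕ, γ * 2⁻¹ ^ (k + 1) < x ∧ x ≤ 2 * (γ * 2⁻¹ ^ (k + 1)) := by
  have hex : ∃ k : ℕ, γ * 2⁻¹ ^ (k + 1) < x := by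
    obtain ⟨k, hk⟩ := ENNReal.exists_inv_two_pow_lt (ENNReal.div_pos hx hγ).ne'
    rw [ENNReal.lt_div_iff_mul_lt (.inr (ENNReal.pow_ne_top (ENNReal.inv_ne_top.2 two_ne_zero)))
      (.inl hγ), mul_comm] at hk
    refine ⟨k, lt_of_le_of_lt ?_ hk⟩
    rw [pow_succ]
    gcongr
    exact mul_le_of_le_one_right' (by norm_num)
  refine ⟨Nat.find hex, Nat.find_spec hex, ?_⟩
  have hdouble : ∀ k : ℕ, 2 * (γ * 2⁻¹ ^ (k + 1)) = γ * 2⁻¹ ^ k := fun k => by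
    rw [pow_succ, ← mul_assoc γ, mul_comm 2, mul_assoc, ENNReal.inv_mul_cancel two_ne_zero
      ENNReal.ofNat_ne_top, mul_one]
  rw [hdouble]
  cases hk : Nat.find hex with
  | zero => simpa using hxγ
  | succ j => exact not_lt.1 (Nat.find_min hex (hk ▸ j.lt_succ_self))

theorem lintegral_inv_rpow_le_of_measure_setOf_le {β : Type*} [MeasurableSpace β]
    {m : Measure β} {g : β → ℝ≥0∞} {S : Set β} {G : ℝ≥0∞}
    (hlevel : ∀ c, m {x | g x ≤ c} ≤ c) (hG : ∀ x ∈ S, g x ≤ G) :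
    ∫⁻ x in S, (g x ^ (2⁻¹ : ℝ))⁻¹ ∂m ≤ 4 * G ^ (2⁻¹ : ℝ) := by
  set h : β → ℝ≥0∞ := fun x => g x ^ (2⁻¹ : ℝ)
  set γ := G ^ (2⁻¹ : ℝ)
  rcases eq_or_ne G ⊤ with rfl | hG_top
  · simp [γ]
  have hγ : γ ≠ ⊤ := ENNReal.rpow_ne_top_of_nonneg (by norm_num) hG_top
  have hlevel' : ∀ c, m {x | h x ≤ c} ≤ c ^ 2 := fun c =>
    calc m {x | h x ≤ c} ≤ m {x | g x ≤ c ^ 2} := measure_mono fun x (hx : h x ≤ c) =>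
          (ENNReal.rpow_inv_two_sq (g x)).symm.trans_le (pow_le_pow_left₀ zero_le hx 2)
      _ ≤ c ^ 2 := hlevel _
  set a : ℕ → ℝ≥0∞ := fun k => γ * 2⁻¹ ^ (k + 1)
  set E : ℕ → Set β := fun k => {x | a k < h x ∧ h x ≤ 2 * a k}
  have hcover : S ⊆ {x | h x ≤ 0} ∪ ⋃ k, E k := by
    intro x hx
    rcases eq_or_ne (h x) 0 with hx0 | hx0
    · exact .inl hx0.le
    · exact .inr (mem_iUnion.2 (ENNReal.exists_mul_inv_two_pow_lt_le hx0
        (ENNReal.rpow_le_rpow (hG x hx) (by norm_num)) hγ))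
  have hE : ∀ k, ∫⁻ x in E k, (h x)⁻¹ ∂m ≤ 4 * a k := fun k =>
    calc ∫⁻ x in E k, (h x)⁻¹ ∂m ≤ ∫⁻ _ in E k, (a k)⁻¹ ∂m :=
          setLIntegral_mono measurable_const fun x hx => ENNReal.inv_le_inv.2 hx.1.le
      _ = (a k)⁻¹ * m (E k) := setLIntegral_const _ _
      _ ≤ (a k)⁻¹ * (2 * a k) ^ 2 :=
          mul_le_mul_right ((measure_mono fun x hx => hx.2).trans (hlevel' _)) _
      _ = 4 * a k * ((a k)⁻¹ * a k) := by ring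
      _ ≤ 4 * a k := mul_le_of_le_one_right' (ENNReal.inv_mul_le_one _)
  calc ∫⁻ x in S, (h x)⁻¹ ∂m
      ≤ ∫⁻ x in {x | h x ≤ 0} ∪ ⋃ k, E k, (h x)⁻¹ ∂m := lintegral_mono_set hcover
    _ ≤ ∫⁻ x in {x | h x ≤ 0}, (h x)⁻¹ ∂m + ∫⁻ x in ⋃ k, E k, (h x)⁻¹ ∂m :=
        lintegral_union_le _ _ _
    _ ≤ 0 + ∑' k, 4 * a k := by
        gcongr
        · exact (setLIntegral_measure_zero _ _ (by simpa using hlevel' 0)).le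
        · exact (lintegral_iUnion_le _ _).trans (ENNReal.tsum_le_tsum hE)
    _ = 4 * γ := by
        simp only [a, zero_add, ENNReal.tsum_mul_left, ENNReal.tsum_geometric_add_one,
          ENNReal.one_sub_inv_two, inv_inv, ENNReal.inv_mul_cancel two_ne_zero ENNReal.ofNat_ne_top,
          mul_one]

theorem sq_lintegral_le_lintegral_mul_mul_lintegral_inv {β : Type*} [MeasurableSpace β]
    {m : Measure β} {f w : β → ℝ≥0∞} (hf : Measurable f) (hw : Measurable w)
    (hw0 : ∀ᵐ x ∂m, w x ≠ 0) (hw_top : ∀ᵐ x ∂m, w x ≠ ⊤) :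
    (∫⁻ x, f x ∂m) ^ 2 ≤ (∫⁻ x, f x ^ 2 * w x ∂m) * ∫⁻ x, (w x)⁻¹ ∂m := by
  set r : β → ℝ≥0∞ := fun x => w x ^ (2⁻¹ : ℝ)
  have hr : Measurable r := hw.pow_const _
  have hfactor : ∫⁻ x, f x ∂m = ∫⁻ x, (f * r * r⁻¹) x ∂m := by
    refine lintegral_congr_ae ((hw0.and hw_top).mono fun x hx => ?_)
    simp only [Pi.mul_apply, Pi.inv_apply, mul_assoc]
    rw [ENNReal.mul_inv_cancel (by simpa [r] using hx.1) (by simpa [r] using hx.2), mul_one]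
  have hholder := ENNReal.lintegral_mul_le_Lp_mul_Lq m Real.HolderConjugate.two_two
    (hf.mul hr).aemeasurable hr.inv.aemeasurable
  rw [← hfactor] at hholder
  calc (∫⁻ x, f x ∂m) ^ 2 ≤ ((∫⁻ x, (f * r) x ^ (2 : ℝ) ∂m) ^ (1 / 2 : ℝ)
        * (∫⁻ x, r⁻¹ x ^ (2 : ℝ) ∂m) ^ (1 / 2 : ℝ)) ^ 2 := pow_le_pow_left₀ zero_le hholder 2
    _ = (∫⁻ x, f x ^ 2 * w x ∂m) * ∫⁻ x, (w x)⁻¹ ∂m := by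
        simp only [mul_pow, one_div, ENNReal.rpow_inv_two_sq, ENNReal.rpow_two, Pi.mul_apply,
          Pi.inv_apply, ← ENNReal.inv_pow, r]

theorem measurable_measure_Iic {α : Type*} [LinearOrder α] [TopologicalSpace α]
    [OrderClosedTopology α] [MeasurableSpace α] [BorelSpace α] (m : Measure α) :
    Measurable fun x => m (Iic x) :=
  Monotone.measurable fun _ _ h => measure_mono (Iic_subset_Iic.2 h)

section Order

variable {α : Type*} [LinearOrder α] [TopologicalSpace α] [OrderTopology α]
  [SecondCountableTopology α] [MeasurableSpace α]

theorem measure_setOf_measure_Iic_le (m : Measure α) (c : ℝ≥0∞) :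
    m {x | m (Iic x) ≤ c} ≤ c := by
  set L := {x | m (Iic x) ≤ c}
  by_cases hmax : ∃ a ∈ L, ∀ x ∈ L, x ≤ a
  · obtain ⟨a, ha, hle⟩ := hmax
    exact (measure_mono hle).trans ha
  push Not at hmax
  obtain ⟨T, hTc, hT⟩ :=
    TopologicalSpace.isOpen_iUnion_countable (fun x : L => Iio (x : α)) fun _ => isOpen_Iio
  have hcover : L ⊆ ⋃ x ∈ T, Iic (x : α) := by
    intro y hy
    obtain ⟨z, hz, hyz⟩ := hmax y hy
    have hy' : y ∈ ⋃ x ∈ T, Iio (x : α) := hT ▸ mem_iUnion.2 ⟨⟨z, hz⟩, hyz⟩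
    exact biUnion_mono subset_rfl (fun _ _ => Iio_subset_Iic_self) hy'
  have hdir : DirectedOn (Function.onFun (· ⊆ ·) fun x : L => Iic (x : α)) T := by
    intro x hx y hy
    rcases le_total (x : α) y with h | h
    · exact ⟨y, hy, Iic_subset_Iic.2 h, subset_rfl⟩
    · exact ⟨x, hx, subset_rfl, Iic_subset_Iic.2 h⟩
  calc m L ≤ m (⋃ x ∈ T, Iic (x : α)) := measure_mono hcover
    _ = ⨆ x ∈ T, m (Iic (x : α)) := measure_biUnion_eq_iSup hTc hdir
    _ ≤ c := iSup₂_le fun x _ => x.2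

theorem measure_setOf_measure_Ici_le (m : Measure α) (c : ℝ≥0∞) :
    m {x | m (Ici x) ≤ c} ≤ c :=
  measure_setOf_measure_Iic_le (α := αᵒᵈ) m c

theorem ae_measure_Iic_ne_zero (m : Measure α) : ∀ᵐ x ∂m, m (Iic x) ≠ 0 := by
  rw [ae_iff]; simpa using measure_setOf_measure_Iic_le m 0

theorem ae_measure_Ici_ne_zero (m : Measure α) : ∀ᵐ x ∂m, m (Ici x) ≠ 0 :=
  ae_measure_Iic_ne_zero (α := αᵒᵈ) m

theorem rpow_mul_lintegral_Ici_le (ν : Measure α) {W : α → ℝ≥0∞} {A : ℝ≥0∞}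
    (hA : ∀ t, ν (Ici t) * W t ≤ A) (s : α) :
    W s ^ (2⁻¹ : ℝ) * ∫⁻ t in Ici s, W t ^ (2⁻¹ : ℝ) ∂ν ≤ 4 * A := by
  rcases eq_or_ne A ⊤ with rfl | hA_top
  · simp
  set v : α → ℝ≥0∞ := fun t => ν (Ici t) ^ (2⁻¹ : ℝ)
  set a := A ^ (2⁻¹ : ℝ)
  have ha : a ≠ ⊤ := ENNReal.rpow_ne_top_of_nonneg (by norm_num) hA_top
  have hprod : ∀ t, W t ^ (2⁻¹ : ℝ) * v t ≤ a := fun t => by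
    rw [← ENNReal.mul_rpow_of_nonneg _ _ (by norm_num), mul_comm]
    exact ENNReal.rpow_le_rpow (hA t) (by norm_num)
  have hW : ∀ᵐ t ∂ν, W t ^ (2⁻¹ : ℝ) ≤ a * (v t)⁻¹ :=
    (ae_measure_Ici_ne_zero ν).mono fun t ht => by
      rw [← div_eq_mul_inv, ENNReal.le_div_iff_mul_le (.inl (by simpa [v] using ht)) (.inr ha)]
      exact hprod t
  have hinv : ∫⁻ t in Ici s, (v t)⁻¹ ∂ν ≤ 4 * v s :=
    lintegral_inv_rpow_le_of_measure_setOf_le (measure_setOf_measure_Ici_le ν)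
      fun t ht => measure_mono (Ici_subset_Ici.2 ht)
  calc W s ^ (2⁻¹ : ℝ) * ∫⁻ t in Ici s, W t ^ (2⁻¹ : ℝ) ∂ν
      ≤ W s ^ (2⁻¹ : ℝ) * ∫⁻ t in Ici s, a * (v t)⁻¹ ∂ν :=
        mul_le_mul_right (lintegral_mono_ae (ae_restrict_of_ae hW)) _
    _ = W s ^ (2⁻¹ : ℝ) * (a * ∫⁻ t in Ici s, (v t)⁻¹ ∂ν) := by
        rw [lintegral_const_mul' _ _ ha]
    _ ≤ W s ^ (2⁻¹ : ℝ) * (a * (4 * v s)) := by gcongr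
    _ = 4 * a * (W s ^ (2⁻¹ : ℝ) * v s) := by ring
    _ ≤ 4 * a * a := by gcongr; exact hprod s
    _ = 4 * A := by rw [mul_assoc, ← sq, ENNReal.rpow_inv_two_sq]

variable [BorelSpace α]

theorem sq_lintegral_Iic_le (m : Measure α) {f : α → ℝ≥0∞} (hf : Measurable f) {t : α}
    (ht : m (Iic t) ≠ ⊤) :
    (∫⁻ x in Iic t, f x ∂m) ^ 2 ≤
      4 * m (Iic t) ^ (2⁻¹ : ℝ) * ∫⁻ x in Iic t, f x ^ 2 * m (Iic x) ^ (2⁻¹ : ℝ) ∂m := by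
  have hw0 : ∀ᵐ x ∂m.restrict (Iic t), m (Iic x) ^ (2⁻¹ : ℝ) ≠ 0 :=
    ae_restrict_of_ae ((ae_measure_Iic_ne_zero m).mono fun x hx => by simpa using hx)
  have hw_top : ∀ᵐ x ∂m.restrict (Iic t), m (Iic x) ^ (2⁻¹ : ℝ) ≠ ⊤ :=
    ae_restrict_of_forall_mem measurableSet_Iic fun x hx =>
      ENNReal.rpow_ne_top_of_nonneg (by norm_num) (ne_top_of_le_ne_top ht (measure_mono (Iic_subset_Iic.2 hx)))
  have hinv : ∫⁻ x in Iic t, (m (Iic x) ^ (2⁻¹ : ℝ))⁻¹ ∂m ≤ 4 * m (Iic t) ^ (2⁻¹ : ℝ) :=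
    lintegral_inv_rpow_le_of_measure_setOf_le (measure_setOf_measure_Iic_le m)
      fun x hx => measure_mono (Iic_subset_Iic.2 hx)
  calc (∫⁻ x in Iic t, f x ∂m) ^ 2
      ≤ (∫⁻ x in Iic t, f x ^ 2 * m (Iic x) ^ (2⁻¹ : ℝ) ∂m)
          * ∫⁻ x in Iic t, (m (Iic x) ^ (2⁻¹ : ℝ))⁻¹ ∂m :=
        sq_lintegral_le_lintegral_mul_mul_lintegral_inv hf
          ((measurable_measure_Iic m).pow_const _) hw0 hw_top
    _ ≤ _ := by rw [mul_comm]; gcongr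

theorem lintegral_mul_lintegral_Iic_swap (μ ν : Measure α) [SFinite μ] [SFinite ν]
    {h w : α → ℝ≥0∞} (hh : Measurable h) (hw : Measurable w) :
    ∫⁻ t, w t * ∫⁻ s in Iic t, h s ∂μ ∂ν = ∫⁻ s, h s * ∫⁻ t in Ici s, w t ∂ν ∂μ := by
  have hF : Measurable fun p : α × α => if p.2 ≤ p.1 then w p.1 * h p.2 else 0 :=
    Measurable.ite (measurableSet_le measurable_snd measurable_fst)
      ((hw.comp measurable_fst).mul (hh.comp measurable_snd)) measurable_const
  calc ∫⁻ t, w t * ∫⁻ s in Iic t, h s ∂μ ∂ν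
      = ∫⁻ t, ∫⁻ s, (if s ≤ t then w t * h s else 0) ∂μ ∂ν := by
        congr! 2 with t
        rw [← lintegral_const_mul _ hh, ← lintegral_indicator measurableSet_Iic]
        simp only [indicator, mem_Iic]
    _ = ∫⁻ s, ∫⁻ t, (if s ≤ t then w t * h s else 0) ∂ν ∂μ :=
        lintegral_lintegral_swap hF.aemeasurable
    _ = ∫⁻ s, h s * ∫⁻ t in Ici s, w t ∂ν ∂μ := by
        congr! 2 with s
        rw [mul_comm, ← lintegral_mul_const _ hw, ← lintegral_indicator measurableSet_Ici]
        simp only [indicator, mem_Ici]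

theorem lintegral_sq_lintegral_Iic_le (μ ν : Measure α) [SFinite μ] [SFinite ν]
    (hμ : ∀ t, μ (Iic t) ≠ ⊤) {A : ℝ≥0∞} (hA : ∀ t, ν (Ici t) * μ (Iic t) ≤ A)
    {f : α → ℝ≥0∞} (hf : Measurable f) :
    ∫⁻ t, (∫⁻ s in Iic t, f s ∂μ) ^ 2 ∂ν ≤ 16 * A * ∫⁻ s, f s ^ 2 ∂μ := by
  have hw : Measurable fun t => μ (Iic t) ^ (2⁻¹ : ℝ) := (measurable_measure_Iic μ).pow_const _
  calc ∫⁻ t, (∫⁻ s in Iic t, f s ∂μ) ^ 2 ∂ν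
      ≤ ∫⁻ t, 4 * (μ (Iic t) ^ (2⁻¹ : ℝ)
          * ∫⁻ s in Iic t, f s ^ 2 * μ (Iic s) ^ (2⁻¹ : ℝ) ∂μ) ∂ν :=
        lintegral_mono fun t => (sq_lintegral_Iic_le μ hf (hμ t)).trans_eq (mul_assoc _ _ _)
    _ = 4 * ∫⁻ s, f s ^ 2 * (μ (Iic s) ^ (2⁻¹ : ℝ)
          * ∫⁻ t in Ici s, μ (Iic t) ^ (2⁻¹ : ℝ) ∂ν) ∂μ := by
        rw [lintegral_const_mul' _ _ ENNReal.ofNat_ne_top,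
          lintegral_mul_lintegral_Iic_swap (h := fun s => f s ^ 2 * μ (Iic s) ^ (2⁻¹ : ℝ)) μ ν
            ((hf.pow_const 2).mul hw) hw]
        simp only [mul_assoc]
    _ ≤ 4 * ∫⁻ s, f s ^ 2 * (4 * A) ∂μ :=
        mul_le_mul_right (lintegral_mono fun s =>
          mul_le_mul_right (rpow_mul_lintegral_Ici_le ν hA s) _) _
    _ = 16 * A * ∫⁻ s, f s ^ 2 ∂μ := by
        rw [lintegral_mul_const _ (hf.pow_const 2)]
        ring

end Order

/-- Muckenhoupt's two-weight Hardy inequality on `(0,∞)`. -/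
theorem two_weight_hardy :
    ∃ C : ℝ≥0∞, C ≠ ⊤ ∧
      ∀ (μ ν : Measure ℝ), IsLocallyFiniteMeasure μ → IsLocallyFiniteMeasure ν →
        ∀ A : ℝ≥0∞, (∀ r : ℝ, 0 < r → ν (Ici r) * μ (Ioc 0 r) ≤ A) →
          ∀ f : ℝ → ℝ≥0∞, Measurable f →
            ∫⁻ t in Ioi (0 : ℝ), (∫⁻ s in Ioc (0 : ℝ) t, f s ∂μ) ^ 2 ∂ν ≤
              C * A * ∫⁻ s in Ioi (0 : ℝ), (f s) ^ 2 ∂μ := by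
  refine ⟨16, ENNReal.ofNat_ne_top, fun μ ν _ _ A hA f hf => ?_⟩
  have hμ₀ : ∀ t, μ.restrict (Ioi 0) (Iic t) = μ (Ioc 0 t) := fun t => by
    rw [Measure.restrict_apply' measurableSet_Ioi, Iic_inter_Ioi]
  have hA₀ : ∀ t, ν.restrict (Ioi 0) (Ici t) * μ.restrict (Ioi 0) (Iic t) ≤ A := fun t => by
    rw [hμ₀]
    rcases le_or_gt t 0 with ht | ht
    · simp [Ioc_eq_empty ht.not_gt]
    · exact (mul_le_mul_left (Measure.restrict_apply_le _ _) _).trans (hA t ht)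
  have hF : ∀ t, ∫⁻ s in Ioc 0 t, f s ∂μ = ∫⁻ s in Iic t, f s ∂μ.restrict (Ioi 0) := fun t => by
    rw [Measure.restrict_restrict measurableSet_Iic, Iic_inter_Ioi]
  simp_rw [hF]
  exact lintegral_sq_lintegral_Iic_le _ _ (fun t => hμ₀ t ▸ measure_Ioc_lt_top.ne) hA₀ hf
end

section
/- Let ν be a locally finite positive measure on ℝⁿ supported outside the double 2B of a ball B, let ω be supported in B, and let 0 ≤ α < n. Then for the α-fractional Riesz transform R^{α,n} with kernel (y-x)/|y-x|^{n+1-α}, ∫_{ℝⁿ∖2B} | ∫_B |x-y|^{α-n} g(x) dω(x) |² dν(y) ≤ C ‖g‖²_{L²(ω)} · (|B|_ω / |B|^{1-α/n}) · P^α(B, ν), where P^α(B,ν) = ∫ ( |B|^{1/n} / (|B|^{1/n} + |y - c_B|)² )^{n-α} dν(y) is the reproducing Poisson integral. -/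
/-!
Fix `y ∉ 2B` and put `d = |y - c_B| ≥ 2r`. For `x ∈ B` we have `|x - y| ≥ d / 2`, so by
Cauchy–Schwarz the square of the inner integral is at most `(d / 2)^{2(α-n)} ‖g‖²_{L²(ω)} |B|_ω`.
Writing `|B|^{1/n} = κ r`, with `κ^n` the volume of the unit ball, the inequality
`κ r + d ≤ (κ + 2) d / 2` turns `(d / 2)^{2(α-n)} |B|^{1-α/n}` into at most
`(κ + 2)^{2(n-α)}` times the Poisson kernel `(|B|^{1/n} / (|B|^{1/n} + d)²)^{n-α}`.
Integrating in `y` against `ν` gives the estimate with `C = (κ + 2)^{2(n-α)}`.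
-/

open MeasureTheory Metric
open scoped ENNReal

/-- `|B|^{1/n}`, the `n`-th root of the Lebesgue measure of the ball `B(c,r)`. -/
noncomputable def ballSide (n : ℕ) (c : EuclideanSpace ℝ (Fin n)) (r : ℝ) : ℝ :=
  (volume (Metric.ball c r)).toReal ^ (1 / (n : ℝ))

lemma sq_lintegral_le_lintegral_sq_mul_measure_univ {X : Type*} [MeasurableSpace X]
    (μ : Measure X) (f : X → ℝ≥0∞) :
    (∫⁻ x, f x ∂μ) ^ 2 ≤ (∫⁻ x, f x ^ 2 ∂μ) * μ Set.univ := by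
  obtain ⟨f', hf'm, hf'f, hf'eq⟩ := exists_measurable_le_lintegral_eq μ f
  have hCS := ENNReal.lintegral_mul_le_Lp_mul_Lq μ Real.HolderConjugate.two_two
    hf'm.aemeasurable (aemeasurable_const (b := (1 : ℝ≥0∞)))
  simp only [Pi.mul_apply, mul_one, ENNReal.one_rpow, lintegral_const, one_mul] at hCS
  calc (∫⁻ x, f x ∂μ) ^ 2
      ≤ ((∫⁻ x, f' x ^ (2 : ℝ) ∂μ) ^ (1 / 2 : ℝ) * μ Set.univ ^ (1 / 2 : ℝ)) ^ 2 := by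
        rw [hf'eq]; gcongr
    _ = (∫⁻ x, f' x ^ 2 ∂μ) * μ Set.univ := by
        rw [mul_pow, ← ENNReal.rpow_mul_natCast, ← ENNReal.rpow_mul_natCast]
        norm_num
    _ ≤ (∫⁻ x, f x ^ 2 ∂μ) * μ Set.univ := by
        gcongr with x
        exact hf'f x

lemma half_dist_le_dist_of_mem_ball {X : Type*} [PseudoMetricSpace X] {c x y : X} {r : ℝ}
    (hx : x ∈ ball c r) (hy : 2 * r ≤ dist y c) : dist y c / 2 ≤ dist x y := by
  linarith [mem_ball.1 hx, dist_triangle y x c, dist_comm x y]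

lemma sq_setLIntegral_rpow_dist_mul_le {X : Type*} [PseudoMetricSpace X] [MeasurableSpace X]
    [OpensMeasurableSpace X] (ω : Measure X) (g : X → ℝ≥0∞) {c y : X} {r p : ℝ} (hp : p ≤ 0)
    (hr : 0 < r) (hy : 2 * r ≤ dist y c) :
    (∫⁻ x in ball c r, ENNReal.ofReal (dist x y ^ p) * g x ∂ω) ^ 2 ≤
      ENNReal.ofReal ((dist y c / 2) ^ p) ^ 2 * (∫⁻ x, g x ^ 2 ∂ω) * ω (ball c r) := by
  have hkernel : ∀ x ∈ ball c r, dist x y ^ p ≤ (dist y c / 2) ^ p := fun x hx =>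
    Real.rpow_le_rpow_of_nonpos (by linarith) (half_dist_le_dist_of_mem_ball hx hy) hp
  calc (∫⁻ x in ball c r, ENNReal.ofReal (dist x y ^ p) * g x ∂ω) ^ 2
      ≤ (ENNReal.ofReal ((dist y c / 2) ^ p) * ∫⁻ x in ball c r, g x ∂ω) ^ 2 := by
        rw [← lintegral_const_mul' _ _ ENNReal.ofReal_ne_top]
        gcongr ?_ ^ 2
        exact setLIntegral_mono' measurableSet_ball fun x hx =>
          mul_le_mul_left (ENNReal.ofReal_le_ofReal (hkernel x hx)) _
    _ ≤ ENNReal.ofReal ((dist y c / 2) ^ p) ^ 2 *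
          ((∫⁻ x in ball c r, g x ^ 2 ∂ω) * ω (ball c r)) := by
        rw [mul_pow, ← Measure.restrict_apply_univ]
        gcongr
        exact sq_lintegral_le_lintegral_sq_mul_measure_univ _ g
    _ ≤ _ := by
        rw [← mul_assoc]
        gcongr
        exact Measure.restrict_le_self

lemma ballSide_eq_mul {n : ℕ} (hn : 0 < n) (c : EuclideanSpace ℝ (Fin n)) {r : ℝ} (hr : 0 < r) :
    ballSide n c r = ballSide n 0 1 * r := by
  have hvol := Measure.addHaar_ball_of_pos volume c hr
  rw [finrank_euclideanSpace_fin] at hvol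
  rw [ballSide, ballSide, hvol, ENNReal.toReal_mul, ENNReal.toReal_ofReal (by positivity),
    Real.mul_rpow (by positivity) ENNReal.toReal_nonneg, one_div,
    Real.pow_rpow_inv_natCast hr.le hn.ne', mul_comm]

lemma ballSide_rpow_sub {n : ℕ} (hn : 0 < n) (c : EuclideanSpace ℝ (Fin n)) (r α : ℝ) :
    ballSide n c r ^ ((n : ℝ) - α) = (volume (ball c r)).toReal ^ (1 - α / n) := by
  rw [ballSide, ← Real.rpow_mul ENNReal.toReal_nonneg]
  congr 1
  field_simp

lemma div_half_sq_le_mul_div_add_sq {κ r d : ℝ} (hκ : 0 ≤ κ) (hr : 0 < r) (hd : 2 * r ≤ d) :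
    κ * r / (d / 2) ^ 2 ≤ (κ + 2) ^ 2 * (κ * r / (κ * r + d) ^ 2) := by
  have hd0 : 0 < d := by linarith
  have hsum : κ * r + d ≤ (κ + 2) * (d / 2) := by nlinarith
  rw [mul_div_assoc', div_le_div_iff₀ (by positivity) (pow_pos (by positivity) 2)]
  calc κ * r * (κ * r + d) ^ 2 ≤ κ * r * ((κ + 2) * (d / 2)) ^ 2 := by gcongr
    _ = _ := by ring

lemma rpow_neg_half_sq_mul_le {κ r d β : ℝ} (hκ : 0 ≤ κ) (hr : 0 < r) (hd : 2 * r ≤ d)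
    (hβ : 0 ≤ β) :
    ((d / 2) ^ (-β)) ^ 2 * (κ * r) ^ β ≤ ((κ + 2) ^ 2) ^ β * (κ * r / (κ * r + d) ^ 2) ^ β := by
  have hd2 : 0 ≤ d / 2 := by linarith
  rw [Real.rpow_pow_comm hd2, Real.rpow_neg (by positivity), inv_mul_eq_div,
    ← Real.div_rpow (by positivity) (by positivity),
    ← Real.mul_rpow (by positivity) (by positivity)]
  exact Real.rpow_le_rpow (by positivity) (div_half_sq_le_mul_div_add_sq hκ hr hd) hβ

noncomputable def tailConst (n : ℕ) (α : ℝ) : ℝ≥0∞ :=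
  ENNReal.ofReal (((ballSide n 0 1 + 2) ^ 2) ^ ((n : ℝ) - α))

lemma sq_setLIntegral_ball_le_tailConst_mul_poisson {n : ℕ} (hn : 0 < n) {α : ℝ} (hαn : α < n)
    (ω : Measure (EuclideanSpace ℝ (Fin n))) (g : EuclideanSpace ℝ (Fin n) → ℝ≥0∞)
    {c y : EuclideanSpace ℝ (Fin n)} {r : ℝ} (hr : 0 < r) (hy : 2 * r ≤ dist y c) :
    (∫⁻ x in ball c r, ENNReal.ofReal (dist x y ^ (α - n)) * g x ∂ω) ^ 2 ≤
      tailConst n α * (∫⁻ x, g x ^ 2 ∂ω) *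
        (ω (ball c r) / ENNReal.ofReal ((volume (ball c r)).toReal ^ (1 - α / n))) *
        ENNReal.ofReal ((ballSide n c r / (ballSide n c r + dist y c) ^ 2) ^ ((n : ℝ) - α)) := by
  set t := ENNReal.ofReal ((dist y c / 2) ^ (α - n))
  set S := ENNReal.ofReal ((volume (ball c r)).toReal ^ (1 - α / n))
  set P := ENNReal.ofReal ((ballSide n c r / (ballSide n c r + dist y c) ^ 2) ^ ((n : ℝ) - α))
  have hS : S ≠ 0 := by
    have hvol : 0 < (volume (ball c r)).toReal :=
      ENNReal.toReal_pos (measure_ball_pos _ _ hr).ne' measure_ball_lt_top.ne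
    simpa [S] using Real.rpow_pos_of_pos hvol _
  have hκ : 0 ≤ ballSide n 0 1 := Real.rpow_nonneg ENNReal.toReal_nonneg _
  have hcompare : t ^ 2 * S ≤ tailConst n α * P := by
    have hdist : 0 ≤ (dist y c / 2) ^ (α - n) := Real.rpow_nonneg (by positivity) _
    simp only [t, S, P]
    rw [← ENNReal.ofReal_pow hdist, ← ballSide_rpow_sub hn, tailConst,
      ← ENNReal.ofReal_mul (by positivity), ← ENNReal.ofReal_mul (by positivity),
      ballSide_eq_mul hn c hr, show α - (n : ℝ) = -(n - α) by ring]
    exact ENNReal.ofReal_le_ofReal (rpow_neg_half_sq_mul_le hκ hr hy (by linarith))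
  calc (∫⁻ x in ball c r, ENNReal.ofReal (dist x y ^ (α - n)) * g x ∂ω) ^ 2
      ≤ t ^ 2 * (∫⁻ x, g x ^ 2 ∂ω) * ω (ball c r) :=
        sq_setLIntegral_rpow_dist_mul_le ω g (by linarith) hr hy
    _ = t ^ 2 * (∫⁻ x, g x ^ 2 ∂ω) * (ω (ball c r) / S * S) := by
        rw [ENNReal.div_mul_cancel hS ENNReal.ofReal_ne_top]
    _ = t ^ 2 * S * (∫⁻ x, g x ^ 2 ∂ω) * (ω (ball c r) / S) := by ring
    _ ≤ tailConst n α * P * (∫⁻ x, g x ^ 2 ∂ω) * (ω (ball c r) / S) := by gcongr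
    _ = _ := by ring

theorem tail_estimate_A2_general {n : ℕ} (hn : 0 < n) (α : ℝ) (hαn : α < n) :
    ∃ C : ℝ≥0∞, C ≠ ⊤ ∧
      ∀ (c : EuclideanSpace ℝ (Fin n)) (r : ℝ), 0 < r →
      ∀ (ω ν : Measure (EuclideanSpace ℝ (Fin n))),
        IsLocallyFiniteMeasure ω → IsLocallyFiniteMeasure ν →
        ω (Metric.ball c r)ᶜ = 0 → ν (Metric.ball c (2 * r)) = 0 →
        ∀ g : EuclideanSpace ℝ (Fin n) → ℝ≥0∞, Measurable g →
          (∫⁻ y, (∫⁻ x in Metric.ball c r,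
              ENNReal.ofReal (dist x y ^ (α - (n : ℝ))) * g x ∂ω) ^ 2 ∂ν) ≤
            C * (∫⁻ x, (g x) ^ 2 ∂ω) *
              (ω (Metric.ball c r) /
                ENNReal.ofReal ((volume (Metric.ball c r)).toReal ^ (1 - α / (n : ℝ)))) *
              (∫⁻ y, ENNReal.ofReal
                ((ballSide n c r / (ballSide n c r + dist y c) ^ 2) ^ ((n : ℝ) - α)) ∂ν) := by
  refine ⟨tailConst n α, ENNReal.ofReal_ne_top, fun c r hr ω ν _ _ _ hν g _ => ?_⟩
  have hfar : ∀ᵐ y ∂ν, 2 * r ≤ dist y c :=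
    (measure_eq_zero_iff_ae_notMem.1 hν).mono fun y hy => not_lt.1 (mt mem_ball.2 hy)
  calc _ ≤ ∫⁻ y, tailConst n α * (∫⁻ x, g x ^ 2 ∂ω) *
          (ω (ball c r) / ENNReal.ofReal ((volume (ball c r)).toReal ^ (1 - α / n))) *
          ENNReal.ofReal ((ballSide n c r / (ballSide n c r + dist y c) ^ 2) ^ ((n : ℝ) - α)) ∂ν :=
        lintegral_mono_ae (hfar.mono fun y hy =>
          sq_setLIntegral_ball_le_tailConst_mul_poisson hn hαn ω g hr hy)
    _ = _ := lintegral_const_mul _ (by fun_prop)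

/-- Tail estimate: if `ω` is supported in a ball `B` and `ν` is supported outside
the double `2B`, then
`∫_{ℝⁿ∖2B} |∫_B |x-y|^{α-n} g dω|² dν ≤ C ‖g‖²_{L²(ω)} (|B|_ω/|B|^{1-α/n}) 𝒫^α(B,ν)`,
where `𝒫^α` is the reproducing Poisson integral. -/
theorem tail_estimate_A2 {n : ℕ} (hn : 0 < n) (α : ℝ) (hα0 : 0 ≤ α) (hαn : α < n) :
    ∃ C : ℝ≥0∞, C ≠ ⊤ ∧
      ∀ (c : EuclideanSpace ℝ (Fin n)) (r : ℝ), 0 < r →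
      ∀ (ω ν : Measure (EuclideanSpace ℝ (Fin n))),
        IsLocallyFiniteMeasure ω → IsLocallyFiniteMeasure ν →
        ω (Metric.ball c r)ᶜ = 0 → ν (Metric.ball c (2 * r)) = 0 →
        ∀ g : EuclideanSpace ℝ (Fin n) → ℝ≥0∞, Measurable g →
          (∫⁻ y, (∫⁻ x in Metric.ball c r,
              ENNReal.ofReal (dist x y ^ (α - (n : ℝ))) * g x ∂ω) ^ 2 ∂ν) ≤
            C * (∫⁻ x, (g x) ^ 2 ∂ω) *
              (ω (Metric.ball c r) /
                ENNReal.ofReal ((volume (Metric.ball c r)).toReal ^ (1 - α / (n : ℝ)))) *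
              (∫⁻ y, ENNReal.ofReal
                ((ballSide n c r / (ballSide n c r + dist y c) ^ 2) ^ ((n : ℝ) - α)) ∂ν) :=
  tail_estimate_A2_general hn α hαn
end

section
/- Let 0 ≤ α < n, δ > 0, and let Ψ : ℝⁿ → ℝⁿ be a C^{1,δ} diffeomorphism with c ≤ ‖DΨ(x)v‖/‖v‖ ≤ C for all x and all nonzero v. Define the error kernel E(x,y) = (Ψ(y)-Ψ(x))/|Ψ(y)-Ψ(x)|^{n+1-α} - DΨ(x)(y-x)/|Ψ(y)-Ψ(x)|^{n+1-α}. Then there is a constant M such that |E(x,y)| ≤ M |y-x|^{α-n+δ} for all x ≠ y with |y-x| ≤ 1. -/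
/-!
A derivative that is `δ`-Hölder with constant `Mψ` makes the first-order Taylor remainder
`Ψ y - Ψ x - DΨ(x)(y - x)` of size at most `Mψ |y - x|^(1+δ)` (mean value inequality for
`Ψ - DΨ(x)`). The derivative is continuous, so by the inverse function theorem the global
inverse of the bijection `Ψ` is differentiable with derivative `DΨ(x)⁻¹` of norm at most `c⁻¹`;
the mean value inequality for `Ψ⁻¹` gives `|Ψ y - Ψ x| ≥ c |y - x|`. Dividing,
the kernel is at most `Mψ c^(α-n-1) |y - x|^(α-n+δ)`.
-/

open Filter Function Set Topology

theorem continuous_of_dist_le_mul_rpow {X Y : Type*} [PseudoMetricSpace X] [PseudoMetricSpace Y]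
    {f : X → Y} {K δ : ℝ} (hδ : 0 < δ) (hf : ∀ x y, dist (f x) (f y) ≤ K * dist x y ^ δ) :
    Continuous f := by
  refine continuous_iff_continuousAt.2 fun x => tendsto_iff_dist_tendsto_zero.2 ?_
  have hbound : Tendsto (fun y => K * dist y x ^ δ) (𝓝 x) (𝓝 0) := by
    refine Continuous.tendsto' (continuous_const.mul
      ((continuous_id.dist continuous_const).rpow_const fun _ => Or.inr hδ.le)) x 0 ?_
    simp [Real.zero_rpow hδ.ne']
  exact squeeze_zero (fun _ => dist_nonneg) (fun y => hf y x) hbound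

section Holder

variable {E F : Type*} [NormedAddCommGroup E] [NormedSpace ℝ E] [NormedAddCommGroup F]
  [NormedSpace ℝ F] {f : E → F} {f' : E → E →L[ℝ] F} {K δ : ℝ}

theorem hasStrictFDerivAt_of_holder (hf : ∀ x, HasFDerivAt f (f' x) x) (hδ : 0 < δ)
    (hH : ∀ x y, ‖f' x - f' y‖ ≤ K * dist x y ^ δ) (x : E) : HasStrictFDerivAt f (f' x) x :=
  hasStrictFDerivAt_of_hasFDerivAt_of_continuousAt (Eventually.of_forall hf)
    (continuous_of_dist_le_mul_rpow hδ fun x y => by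
      simpa only [dist_eq_norm] using hH x y).continuousAt

theorem norm_sub_sub_apply_le_of_holder (hf : ∀ x, HasFDerivAt f (f' x) x) (hK : 0 ≤ K)
    (hδ : 0 ≤ δ) (hH : ∀ x y, ‖f' x - f' y‖ ≤ K * dist x y ^ δ) (x y : E) :
    ‖f y - f x - f' x (y - x)‖ ≤ K * ‖y - x‖ ^ δ * ‖y - x‖ := by
  have hbound : ∀ z ∈ segment ℝ x y, ‖f' z - f' x‖ ≤ K * ‖y - x‖ ^ δ := fun z hz => by
    have hzx : dist z x ≤ ‖y - x‖ := by
      simpa only [Metric.mem_closedBall, dist_comm x y, dist_eq_norm] using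
        segment_subset_closedBall_left x y hz
    exact (hH z x).trans (by gcongr)
  exact (convex_segment x y).norm_image_sub_le_of_norm_hasFDerivWithin_le'
    (fun z _ => (hf z).hasFDerivWithinAt) hbound (left_mem_segment ℝ x y)
    (right_mem_segment ℝ x y)

end Holder

section LowerBound

variable {E : Type*} [NormedAddCommGroup E] [NormedSpace ℝ E] [CompleteSpace E] {c : ℝ}

theorem mul_norm_sub_le_norm_sub_of_bijective {F : Type*} [NormedAddCommGroup F]
    [NormedSpace ℝ F] {f : E → F} (hf : Bijective f) {f' : E → E ≃L[ℝ] F}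
    (hf' : ∀ x, HasStrictFDerivAt f (f' x : E →L[ℝ] F) x) (hc : 0 < c)
    (hlow : ∀ x v, c * ‖v‖ ≤ ‖f' x v‖) (x y : E) : c * ‖y - x‖ ≤ ‖f y - f x‖ := by
  set Φ := Equiv.ofBijective f hf
  have hinv : ∀ z, HasFDerivAt Φ.symm ((f' (Φ.symm z)).symm : F →L[ℝ] E) z := fun z => by
    simpa only [Φ, Equiv.ofBijective_apply_symm_apply] using ((hf' (Φ.symm z)).to_local_left_inverse
      (Eventually.of_forall Φ.symm_apply_apply)).hasFDerivAt
  have hbound : ∀ z, ‖((f' (Φ.symm z)).symm : F →L[ℝ] E)‖ ≤ c⁻¹ := fun z =>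
    ContinuousLinearMap.opNorm_le_bound _ (inv_nonneg.2 hc.le) fun w => by
      simpa [le_inv_mul_iff₀ hc] using hlow (Φ.symm z) ((f' (Φ.symm z)).symm w)
  have := convex_univ.norm_image_sub_le_of_norm_hasFDerivWithin_le
    (fun z _ => (hinv z).hasFDerivWithinAt) (fun z _ => hbound z) (mem_univ (f x))
    (mem_univ (f y))
  rw [← le_inv_mul_iff₀ hc]
  simpa [Φ] using this

theorem mul_norm_sub_le_norm_sub_of_bijective_of_finiteDimensional [FiniteDimensional ℝ E]
    {f : E → E} (hf : Bijective f) {f' : E → E →L[ℝ] E} (hf' : ∀ x, HasStrictFDerivAt f (f' x) x)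
    (hc : 0 < c) (hlow : ∀ x v, c * ‖v‖ ≤ ‖f' x v‖) (x y : E) : c * ‖y - x‖ ≤ ‖f y - f x‖ := by
  have hinj : ∀ x, Injective (f' x) := fun x => (injective_iff_map_eq_zero _).2 fun v hv =>
    norm_le_zero_iff.1 (nonpos_of_mul_nonpos_right (by simpa [hv] using hlow x v) hc)
  let e x := (LinearEquiv.ofInjectiveEndo (f' x : E →ₗ[ℝ] E) (hinj x)).toContinuousLinearEquiv
  exact mul_norm_sub_le_norm_sub_of_bijective hf (f' := e) hf' hc hlow x y

end LowerBound

theorem error_kernel_improved_estimate_general {n : ℕ}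
    (α : ℝ) (hαn : α < n)
    (δ : ℝ) (hδ0 : 0 < δ)
    (Ψ : EuclideanSpace ℝ (Fin n) → EuclideanSpace ℝ (Fin n))
    (hbij : Function.Bijective Ψ) (hdiff : Differentiable ℝ Ψ)
    (Mψ : ℝ)
    (hM1 : ∀ x, ‖fderiv ℝ Ψ x‖ ≤ Mψ)
    (hM2 : ∀ x y, ‖fderiv ℝ Ψ x - fderiv ℝ Ψ y‖ ≤ Mψ * dist x y ^ δ)
    (c : ℝ) (hc : 0 < c)
    (hlow : ∀ x v, c * ‖v‖ ≤ ‖fderiv ℝ Ψ x v‖) :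
    ∃ M : ℝ, ∀ x y, x ≠ y → dist y x ≤ 1 →
      ‖(‖Ψ y - Ψ x‖ ^ ((n : ℝ) + 1 - α))⁻¹ •
          (Ψ y - Ψ x - fderiv ℝ Ψ x (y - x))‖ ≤
        M * dist y x ^ (α - (n : ℝ) + δ) := by
  have hderiv : ∀ x, HasFDerivAt Ψ (fderiv ℝ Ψ x) x := fun x => (hdiff x).hasFDerivAt
  have hMψ : 0 ≤ Mψ := (norm_nonneg _).trans (hM1 0)
  have hlower := mul_norm_sub_le_norm_sub_of_bijective_of_finiteDimensional hbij
    (hasStrictFDerivAt_of_holder hderiv hδ0 hM2) hc hlow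
  have htaylor := norm_sub_sub_apply_le_of_holder hderiv hMψ hδ0.le hM2
  set e : ℝ := (n : ℝ) + 1 - α
  have he : 0 ≤ e := by linarith
  refine ⟨Mψ / c ^ e, fun x y hxy _ => ?_⟩
  have hr : 0 < ‖y - x‖ := norm_pos_iff.2 (sub_ne_zero.2 hxy.symm)
  rw [norm_smul, norm_inv, Real.norm_of_nonneg (by positivity), dist_eq_norm]
  calc (‖Ψ y - Ψ x‖ ^ e)⁻¹ * ‖Ψ y - Ψ x - fderiv ℝ Ψ x (y - x)‖
      ≤ ((c * ‖y - x‖) ^ e)⁻¹ * (Mψ * ‖y - x‖ ^ δ * ‖y - x‖) := by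
        gcongr
        exacts [hlower x y, htaylor x y]
    _ = Mψ / c ^ e * ‖y - x‖ ^ (α - n + δ) := by
        have hexp : ‖y - x‖ ^ (α - n + δ) = ‖y - x‖ ^ δ * ‖y - x‖ / ‖y - x‖ ^ e := by
          rw [← Real.rpow_add_one hr.ne', ← Real.rpow_sub hr]
          congr 1
          ring
        rw [Real.mul_rpow hc.le hr.le, hexp]
        field_simp

/-- The error kernel obtained by replacing the phase `Ψ(y) - Ψ(x)` in the
pullback Riesz kernel by its tangent-plane approximation `DΨ(x)(y-x)` satisfies
the improved local estimate `|E(x,y)| ≤ M |y-x|^{α-n+δ}` for `|y-x| ≤ 1`. -/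
theorem error_kernel_improved_estimate {n : ℕ} (hn : 0 < n)
    (α : ℝ) (hα0 : 0 ≤ α) (hαn : α < n)
    (δ : ℝ) (hδ0 : 0 < δ) (hδ1 : δ ≤ 1)
    (Ψ : EuclideanSpace ℝ (Fin n) → EuclideanSpace ℝ (Fin n))
    (hbij : Function.Bijective Ψ) (hdiff : Differentiable ℝ Ψ)
    (Mψ : ℝ)
    (hM1 : ∀ x, ‖fderiv ℝ Ψ x‖ ≤ Mψ)
    (hM2 : ∀ x y, ‖fderiv ℝ Ψ x - fderiv ℝ Ψ y‖ ≤ Mψ * dist x y ^ δ)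
    (c C : ℝ) (hc : 0 < c) (hC : 0 < C)
    (hlow : ∀ x v, c * ‖v‖ ≤ ‖fderiv ℝ Ψ x v‖)
    (hup : ∀ x v, ‖fderiv ℝ Ψ x v‖ ≤ C * ‖v‖) :
    ∃ M : ℝ, ∀ x y, x ≠ y → dist y x ≤ 1 →
      ‖(‖Ψ y - Ψ x‖ ^ ((n : ℝ) + 1 - α))⁻¹ •
          (Ψ y - Ψ x - fderiv ℝ Ψ x (y - x))‖ ≤
        M * dist y x ^ (α - (n : ℝ) + δ) :=
  error_kernel_improved_estimate_general α hαn δ hδ0 Ψ hbij hdiff Mψ hM1 hM2 c hc hlow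
end

section
/- Let 0 ≤ α < n, ψ : ℝ → ℝⁿ⁻¹ Lipschitz with ‖Dψ‖_∞ < (n-α)/(8n²), and let Ψ(x) = x - (0,ψ(x₁)). Suppose x lies on the x₁-axis, and let w = (w¹, w') satisfy |w' - x'| ≤ (1/4)√(n-α)|w¹ - x¹| and |ψ(w¹)-ψ(x¹)| ≤ (1/4)√(n-α)|w¹-x¹|. Then -|Ψ(w)-Ψ(x)|² + (n+1-α)|w¹-x¹|² ≥ (3/4)(n-α)(w¹-x¹)², i.e. the quantity A = [|Ψ(w)-Ψ(x)|² - (n+1-α)(w¹-x¹)²]/|Ψ(w)-Ψ(x)|^{n+3-α} satisfies -A ≥ (3/4)(n-α)(w¹-x¹)²/|Ψ(w)-Ψ(x)|^{n+3-α}. -/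
/-- The key sign estimate in the energy reversal for the conformal Riesz
transform: writing `n = m + 1`, `d = w¹ - x¹`, and
`|Ψ(w) - Ψ(x)|² = d² + |w' - x' - (ψ(w¹) - ψ(x¹))|²` for `Ψ(x) = x - (0,ψ(x₁))`,
if `x` lies on the `x₁`-axis and `|w' - x'|, |ψ(w¹) - ψ(x¹)| ≤ (1/4)√(n-α)|d|`,
then `-|Ψ(w)-Ψ(x)|² + (n+1-α)d² ≥ (3/4)(n-α)d²`. -/
theorem energy_reversal_sign_estimate {m : ℕ}
    (α : ℝ) (hα0 : 0 ≤ α) (hαn : α < (m : ℝ) + 1)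
    (ψ : ℝ → EuclideanSpace ℝ (Fin m)) (K : NNReal) (hLip : LipschitzWith K ψ)
    (hK : (K : ℝ) < (((m : ℝ) + 1) - α) / (8 * ((m : ℝ) + 1) ^ 2))
    (x w : ℝ × EuclideanSpace ℝ (Fin m)) (hx : x.2 = 0)
    (hside : ‖w.2 - x.2‖ ≤ (1 / 4) * Real.sqrt (((m : ℝ) + 1) - α) * |w.1 - x.1|)
    (hψside : ‖ψ w.1 - ψ x.1‖ ≤ (1 / 4) * Real.sqrt (((m : ℝ) + 1) - α) * |w.1 - x.1|) :
    -((w.1 - x.1) ^ 2 + ‖w.2 - x.2 - (ψ w.1 - ψ x.1)‖ ^ 2) +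
        (((m : ℝ) + 1) + 1 - α) * (w.1 - x.1) ^ 2 ≥
      (3 / 4) * (((m : ℝ) + 1) - α) * (w.1 - x.1) ^ 2 := by
  set d := w.1 - x.1
  have hnα : (0:ℝ) ≤ ((m : ℝ) + 1) - α := by linarith
  have hv : ‖w.2 - x.2 - (ψ w.1 - ψ x.1)‖ ≤
      (1 / 2) * Real.sqrt (((m : ℝ) + 1) - α) * |d| := by
    calc ‖w.2 - x.2 - (ψ w.1 - ψ x.1)‖ ≤ ‖w.2 - x.2‖ + ‖ψ w.1 - ψ x.1‖ :=
          norm_sub_le _ _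
      _ ≤ (1 / 2) * Real.sqrt (((m : ℝ) + 1) - α) * |d| := by linarith
  have h0 : (0:ℝ) ≤ (1 / 2) * Real.sqrt (((m : ℝ) + 1) - α) * |d| := by
    positivity
  have hsq : ‖w.2 - x.2 - (ψ w.1 - ψ x.1)‖ ^ 2 ≤
      ((1 / 2) * Real.sqrt (((m : ℝ) + 1) - α) * |d|) ^ 2 := by
    exact pow_le_pow_left₀ (norm_nonneg _) hv 2
  have hs : Real.sqrt (((m : ℝ) + 1) - α) ^ 2 = ((m : ℝ) + 1) - α := Real.sq_sqrt hnα
  have habs : |d| ^ 2 = d ^ 2 := sq_abs d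
  have : ((1 / 2) * Real.sqrt (((m : ℝ) + 1) - α) * |d|) ^ 2 =
      (1 / 4) * (((m : ℝ) + 1) - α) * d ^ 2 := by
    rw [mul_pow, mul_pow, hs, habs]; ring
  rw [this] at hsq
  linarith
end
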